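/- Let A be a commutative unital *-algebra over ℂ. Every nonzero hermitian multiplicative linear functional χ is an extreme point of the set P₁(A) of positive linear functionals f with f(1) = 1: if χ = t·f + (1−t)·g with f, g ∈ P₁(A) and 0 < t < 1, then f = g = χ. -/

import Mathlib

/-!
If `χ = t f + (1 - t) g` with states `f, g`, then `y = x - χ x • 1` lies in the kernel of the
character, hence so does `star y * y`, so the positive numbers `f (star y * y)` and `g (star y * y)`
vanish. A Cauchy–Schwarz type argument then gives `f y = g y = 0`, i.e. `f x = g x = χ x`.
-/

open scoped ComplexOrder
open ComplexConjugate

theorem eq_zero_and_eq_zero_of_mul_add_mul_eq_zero {R : Type*} [Semiring R] [PartialOrder R]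
    [IsOrderedRing R] [NoZeroDivisors R] {s t a b : R} (hs : 0 < s) (ht : 0 < t)
    (ha : 0 ≤ a) (hb : 0 ≤ b) (h : s * a + t * b = 0) : a = 0 ∧ b = 0 := by
  obtain ⟨hsa, htb⟩ := (add_eq_zero_iff_of_nonneg (mul_nonneg hs.le ha) (mul_nonneg ht.le hb)).mp h
  exact ⟨(mul_eq_zero.mp hsa).resolve_left hs.ne', (mul_eq_zero.mp htb).resolve_left ht.ne'⟩

theorem map_one_eq_one_of_map_mul {A : Type*} [Semiring A] [Algebra ℂ A] (χ : A →ₗ[ℂ] ℂ)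
    (hne : χ ≠ 0) (hmul : ∀ x y : A, χ (x * y) = χ x * χ y) : χ 1 = 1 := by
  obtain ⟨x, hx⟩ : ∃ x, χ x ≠ 0 := by simpa [LinearMap.ext_iff] using hne
  exact (mul_eq_left₀ hx).mp (by rw [← hmul, mul_one])

section PositiveFunctional

variable {A : Type*} [Ring A] [Algebra ℂ A] [StarRing A] [StarModule ℂ A]

theorem apply_star_add_smul_one_mul (f : A →ₗ[ℂ] ℂ) (y : A) (c : ℂ) :
    f (star (y + c • 1) * (y + c • 1)) =
      f (star y * y) + c * f (star y) + conj c * f y + c * conj c * f 1 := by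
  simp only [star_add, star_smul, star_one, add_mul, mul_add, smul_mul_assoc, mul_smul_comm,
    mul_one, one_mul, map_add, map_smul, smul_eq_mul, starRingEnd_apply]
  ring

/-- Positivity on `star (x + c • 1) * (x + c • 1)` for `c = 1` and `c = I` forces
`f (star x) + f x` and `I * (f (star x) - f x)` to be real. -/
theorem map_star_of_nonneg {f : A →ₗ[ℂ] ℂ} (hf : ∀ y : A, 0 ≤ f (star y * y)) (x : A) :
    f (star x) = conj (f x) := by
  have h1 := hf (x + (1 : ℂ) • 1)
  have hI := hf (x + Complex.I • 1)
  rw [apply_star_add_smul_one_mul] at h1 hI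
  have hxx := Complex.nonneg_iff.mp (hf x)
  have h11 := Complex.nonneg_iff.mp (by simpa using hf 1)
  rw [Complex.nonneg_iff] at h1 hI
  apply Complex.ext <;>
    simp only [one_mul, map_one, mul_one, Complex.add_re, Complex.add_im, Complex.conj_I, neg_mul,
      mul_neg, Complex.I_mul_I, neg_neg, Complex.mul_re, Complex.I_re, zero_mul, Complex.I_im,
      zero_sub, Complex.neg_re, Complex.mul_im, zero_add, Complex.neg_im, Complex.conj_re,
      Complex.conj_im] at h1 hI ⊢ <;>
    linarith

/-- Testing positivity on `y - f y • 1` gives `0 ≤ -|f y|²`. -/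
theorem map_eq_zero_of_map_star_mul_self_eq_zero {f : A →ₗ[ℂ] ℂ}
    (hf : ∀ y : A, 0 ≤ f (star y * y)) (hf1 : f 1 = 1) {y : A}
    (hy : f (star y * y) = 0) : f y = 0 := by
  have h := hf (y + (-f y) • 1)
  rw [apply_star_add_smul_one_mul, map_star_of_nonneg hf, hy, hf1] at h
  have hle : f y * conj (f y) ≤ 0 :=
    neg_nonneg.mp (by convert h using 1; simp only [map_neg]; ring)
  simpa using le_antisymm hle (mul_star_self_nonneg (f y))

end PositiveFunctional

theorem herm_char_extreme_general {A : Type*} [CommRing A] [Algebra ℂ A]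
    [StarRing A] [StarModule ℂ A] (χ : A →ₗ[ℂ] ℂ) (hne : χ ≠ 0)
    (hmul : ∀ x y : A, χ (x * y) = χ x * χ y)
    (f g : A →ₗ[ℂ] ℂ)
    (hfpos : ∀ y : A, 0 ≤ f (star y * y)) (hf1 : f 1 = 1)
    (hgpos : ∀ y : A, 0 ≤ g (star y * y)) (hg1 : g 1 = 1)
    (t : ℝ) (ht0 : 0 < t) (ht1 : t < 1)
    (hcomb : χ = (t : ℂ) • f + ((1 : ℂ) - (t : ℂ)) • g) :
    f = χ ∧ g = χ := by
  have hχ1 := map_one_eq_one_of_map_mul χ hne hmul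
  suffices ∀ x, f x = χ x ∧ g x = χ x from
    ⟨LinearMap.ext fun x => (this x).1, LinearMap.ext fun x => (this x).2⟩
  intro x
  set y := x - χ x • (1 : A)
  have hχy : χ (star y * y) = 0 := by simp [y, hmul, hχ1]
  obtain ⟨hfy, hgy⟩ : f (star y * y) = 0 ∧ g (star y * y) = 0 := by
    refine eq_zero_and_eq_zero_of_mul_add_mul_eq_zero (s := (t : ℂ)) (t := 1 - (t : ℂ))
      (by exact_mod_cast ht0) (by exact_mod_cast sub_pos.mpr ht1) (hfpos y) (hgpos y) ?_
    simpa [hcomb] using hχy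
  have hf := map_eq_zero_of_map_star_mul_self_eq_zero hfpos hf1 hfy
  have hg := map_eq_zero_of_map_star_mul_self_eq_zero hgpos hg1 hgy
  simp only [y, map_sub, map_smul, hf1, hg1, smul_eq_mul, mul_one, sub_eq_zero] at hf hg
  exact ⟨hf, hg⟩

/-- Every nonzero hermitian multiplicative linear functional is an extreme point of
the set `P₁(A)` of states. -/
theorem herm_char_extreme {A : Type*} [CommRing A] [Algebra ℂ A]
    [StarRing A] [StarModule ℂ A] (χ : A →ₗ[ℂ] ℂ) (hne : χ ≠ 0)
    (hmul : ∀ x y : A, χ (x * y) = χ x * χ y)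
    (hherm : ∀ x : A, χ (star x) = starRingEnd ℂ (χ x))
    (f g : A →ₗ[ℂ] ℂ)
    (hfpos : ∀ y : A, 0 ≤ f (star y * y)) (hf1 : f 1 = 1)
    (hgpos : ∀ y : A, 0 ≤ g (star y * y)) (hg1 : g 1 = 1)
    (t : ℝ) (ht0 : 0 < t) (ht1 : t < 1)
    (hcomb : χ = (t : ℂ) • f + ((1 : ℂ) - (t : ℂ)) • g) :
    f = χ ∧ g = χ :=
  herm_char_extreme_general χ hne hmul f g hfpos hf1 hgpos hg1 t ht0 ht1 hcomb
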